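/- arXiv:2308.15405 — 2 statements merged into one kernel-verified Lean document; each statement's English description precedes it below -/
import Mathlib

section
/- Let n ≥ 1 and let ℓ₁,...,ℓₙ ∈ {0,1}. Suppose each index i has a label j(i) ∈ {1,...,L}, with nⱼ indices of label j, and bounds 0 < 1/(βⱼn) ≤ 1/(αⱼn) with Σⱼ nⱼ/(βⱼn) ≤ 1. Then the maximum of Σᵢ wᵢ ℓᵢ over weight vectors w with Σᵢ wᵢ = 1 and 1/(β_{j(i)}n) ≤ wᵢ ≤ 1/(α_{j(i)}n) equals min{ 1 - Σⱼ nⱼ/(βⱼn) + Σⱼ (1/(βⱼn)) Σ_{i : j(i)=j} ℓᵢ , Σⱼ (1/(αⱼn)) Σ_{i : j(i)=j} ℓᵢ }. -/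
open Finset

lemma exists_interp {ι : Type*} [Fintype ι] (s : Finset ι) (b a : ι → ℝ)
    (hba : ∀ i ∈ s, b i ≤ a i) (c : ℝ)
    (h1 : ∑ i ∈ s, b i ≤ c) (h2 : c ≤ ∑ i ∈ s, a i) :
    ∃ w : ι → ℝ, (∀ i ∈ s, b i ≤ w i ∧ w i ≤ a i) ∧ ∑ i ∈ s, w i = c := by
  set D := ∑ i ∈ s, (a i - b i) with hD
  have hDs : D = ∑ i ∈ s, a i - ∑ i ∈ s, b i := by rw [hD, Finset.sum_sub_distrib]
  have hD0 : (0:ℝ) ≤ D := by rw [hDs]; linarith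
  rcases eq_or_lt_of_le hD0 with h | h
  · refine ⟨b, fun i hi => ⟨le_rfl, hba i hi⟩, ?_⟩
    linarith [hDs, h.symm]
  · set t := (c - ∑ i ∈ s, b i) / D with ht
    have ht0 : 0 ≤ t := div_nonneg (by linarith) h.le
    have ht1 : t ≤ 1 := by rw [ht, div_le_one h]; linarith
    refine ⟨fun i => b i + t * (a i - b i), fun i hi => ?_, ?_⟩
    · have hab : 0 ≤ a i - b i := by linarith [hba i hi]
      dsimp only
      constructor
      · nlinarith [mul_nonneg ht0 hab]
      · nlinarith [mul_le_of_le_one_left hab ht1]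
    · rw [Finset.sum_add_distrib, ← Finset.mul_sum, ← hD, ht, div_mul_cancel₀ _ h.ne']
      ring

open Finset

/-- closed-form evaluation of the LAB-CVaR objective on zero-one losses. -/
theorem lab_cvar_zero_one_eval
    (n L : ℕ) (hn : 1 ≤ n) (hL : 1 ≤ L)
    (ℓ : Fin n → ℝ) (hℓ : ∀ i, ℓ i = 0 ∨ ℓ i = 1)
    (lab : Fin n → Fin L)
    (α β : Fin L → ℝ) (hα : ∀ j, 0 < α j) (hβ : ∀ j, 0 < β j)
    (hbounds : ∀ j, 1 / (β j * n) ≤ 1 / (α j * n))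
    (N : Fin L → ℕ)
    (hN : ∀ j, N j = (Finset.univ.filter (fun i => lab i = j)).card)
    (hfeas₁ : ∑ j, (N j : ℝ) / (β j * n) ≤ 1)
    (hfeas₂ : 1 ≤ ∑ j, (N j : ℝ) / (α j * n)) :
    IsGreatest
      {s : ℝ | ∃ w : Fin n → ℝ, (∑ i, w i = 1) ∧
        (∀ i, 1 / (β (lab i) * n) ≤ w i ∧ w i ≤ 1 / (α (lab i) * n)) ∧
        s = ∑ i, w i * ℓ i}
      (min
        (1 - ∑ j, (N j : ℝ) / (β j * n)
          + ∑ j, (1 / (β j * n)) * ∑ i ∈ Finset.univ.filter (fun i => lab i = j), ℓ i)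
        (∑ j, (1 / (α j * n)) * ∑ i ∈ Finset.univ.filter (fun i => lab i = j), ℓ i)) := by
  classical
  set b : Fin n → ℝ := fun i => 1 / (β (lab i) * n) with hb
  set a : Fin n → ℝ := fun i => 1 / (α (lab i) * n) with ha
  -- fiberwise sum identities
  have key : ∀ g : Fin L → ℝ,
      ∑ j, g j * ∑ i ∈ Finset.univ.filter (fun i => lab i = j), ℓ i
        = ∑ i, g (lab i) * ℓ i := by
    intro g
    rw [← Finset.sum_fiberwise univ lab (fun i => g (lab i) * ℓ i)]
    refine Finset.sum_congr rfl fun j _ => ?_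
    rw [Finset.mul_sum]
    refine Finset.sum_congr rfl fun i hi => ?_
    have : lab i = j := (Finset.mem_filter.mp hi).2
    rw [this]
  have keyN : ∀ g : Fin L → ℝ, ∑ j, (N j : ℝ) * g j = ∑ i, g (lab i) := by
    intro g
    rw [← Finset.sum_fiberwise univ lab (fun i => g (lab i))]
    refine Finset.sum_congr rfl fun j _ => ?_
    rw [hN j]
    rw [Finset.sum_congr rfl (fun i hi => by rw [(Finset.mem_filter.mp hi).2] :
      ∀ i ∈ Finset.univ.filter (fun i => lab i = j), g (lab i) = g j)]
    rw [Finset.sum_const, nsmul_eq_mul]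
  have hβsum : ∑ j, (N j : ℝ) / (β j * n) = ∑ i, b i := by
    rw [← keyN (fun j => 1 / (β j * n))]
    exact Finset.sum_congr rfl fun j _ => by rw [div_eq_mul_one_div]
  have hαsum : ∑ j, (N j : ℝ) / (α j * n) = ∑ i, a i := by
    rw [← keyN (fun j => 1 / (α j * n))]
    exact Finset.sum_congr rfl fun j _ => by rw [div_eq_mul_one_div]
  rw [hβsum] at hfeas₁
  rw [hαsum] at hfeas₂
  set S : Finset (Fin n) := Finset.univ.filter (fun i => ℓ i = 1) with hS
  -- sums with ℓ reduce to sums over S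
  have hsplitS : ∀ v : Fin n → ℝ, ∑ i, v i * ℓ i = ∑ i ∈ S, v i := by
    intro v
    rw [← Finset.sum_filter_add_sum_filter_not univ (fun i => ℓ i = 1) (fun i => v i * ℓ i)]
    have h1 : ∑ i ∈ S, v i * ℓ i = ∑ i ∈ S, v i :=
      Finset.sum_congr rfl fun i hi => by
        rw [(Finset.mem_filter.mp hi).2, mul_one]
    have h2 : ∑ i ∈ Finset.univ.filter (fun i => ¬ ℓ i = 1), v i * ℓ i = 0 := by
      refine Finset.sum_eq_zero fun i hi => ?_
      rcases hℓ i with h | h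
      · rw [h, mul_zero]
      · exact absurd h (Finset.mem_filter.mp hi).2
    rw [h1, h2, add_zero]
  have hsplit : ∀ v : Fin n → ℝ,
      ∑ i, v i = ∑ i ∈ S, v i + ∑ i ∈ Finset.univ.filter (fun i => ¬ ℓ i = 1), v i :=
    fun v => (Finset.sum_filter_add_sum_filter_not univ (fun i => ℓ i = 1) v).symm
  set T : Finset (Fin n) := Finset.univ.filter (fun i => ¬ ℓ i = 1) with hT
  have hab : ∀ i, b i ≤ a i := fun i => hbounds (lab i)
  have hM : (1 - ∑ j, (N j : ℝ) / (β j * n)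
          + ∑ j, (1 / (β j * n)) * ∑ i ∈ Finset.univ.filter (fun i => lab i = j), ℓ i)
      = 1 - ∑ i ∈ T, b i := by
    rw [hβsum, key (fun j => 1 / (β j * n))]
    have : ∑ i, b i * ℓ i = ∑ i ∈ S, b i := hsplitS b
    rw [this, hsplit b]
    ring
  have hM' : (∑ j, (1 / (α j * n)) * ∑ i ∈ Finset.univ.filter (fun i => lab i = j), ℓ i)
      = ∑ i ∈ S, a i := by
    rw [key (fun j => 1 / (α j * n)), hsplitS a]
  rw [hM, hM']
  constructor
  · -- membership: construct the optimal w
    rcases le_total (1 - ∑ i ∈ T, b i) (∑ i ∈ S, a i) with hc | hc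
    · -- min is first term
      have hcb : ∑ i ∈ S, b i ≤ 1 - ∑ i ∈ T, b i := by
        have := hsplit b; linarith
      obtain ⟨w₀, hw₀b, hw₀s⟩ := exists_interp S b a (fun i _ => hab i)
        (1 - ∑ i ∈ T, b i) hcb hc
      refine ⟨fun i => if ℓ i = 1 then w₀ i else b i, ?_, ?_, ?_⟩
      · rw [hsplit]
        have h1 : ∑ i ∈ S, (if ℓ i = 1 then w₀ i else b i) = ∑ i ∈ S, w₀ i :=
          Finset.sum_congr rfl fun i hi => if_pos (Finset.mem_filter.mp hi).2
        have h2 : ∑ i ∈ T, (if ℓ i = 1 then w₀ i else b i) = ∑ i ∈ T, b i :=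
          Finset.sum_congr rfl fun i hi => if_neg (Finset.mem_filter.mp hi).2
        rw [h1, h2, hw₀s]; ring
      · intro i
        by_cases h : ℓ i = 1
        · simp only [if_pos h]
          exact hw₀b i (Finset.mem_filter.mpr ⟨Finset.mem_univ i, h⟩)
        · simp only [if_neg h]
          exact ⟨le_rfl, hab i⟩
      · rw [hsplitS, min_eq_left hc]
        rw [← hw₀s]
        exact (Finset.sum_congr rfl fun i hi => if_pos (Finset.mem_filter.mp hi).2).symm
    · -- min is second term
      have hTa : 1 - ∑ i ∈ S, a i ≤ ∑ i ∈ T, a i := by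
        have := hsplit a; linarith
      obtain ⟨w₀, hw₀b, hw₀s⟩ := exists_interp T b a (fun i _ => hab i)
        (1 - ∑ i ∈ S, a i) (by linarith) hTa
      refine ⟨fun i => if ℓ i = 1 then a i else w₀ i, ?_, ?_, ?_⟩
      · rw [hsplit]
        have h1 : ∑ i ∈ S, (if ℓ i = 1 then a i else w₀ i) = ∑ i ∈ S, a i :=
          Finset.sum_congr rfl fun i hi => if_pos (Finset.mem_filter.mp hi).2
        have h2 : ∑ i ∈ T, (if ℓ i = 1 then a i else w₀ i) = ∑ i ∈ T, w₀ i :=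
          Finset.sum_congr rfl fun i hi => if_neg (Finset.mem_filter.mp hi).2
        rw [h1, h2, hw₀s]; ring
      · intro i
        by_cases h : ℓ i = 1
        · simp only [if_pos h]
          exact ⟨hab i, le_rfl⟩
        · simp only [if_neg h]
          exact hw₀b i (Finset.mem_filter.mpr ⟨Finset.mem_univ i, h⟩)
      · rw [hsplitS, min_eq_right hc]
        exact (Finset.sum_congr rfl fun i hi => if_pos (Finset.mem_filter.mp hi).2).symm
  · -- upper bound
    rintro s ⟨w, hw1, hwb, rfl⟩
    rw [hsplitS]
    refine le_min ?_ ?_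
    · have h1 : ∑ i ∈ T, b i ≤ ∑ i ∈ T, w i :=
        Finset.sum_le_sum fun i _ => (hwb i).1
      have := hsplit w; linarith
    · exact Finset.sum_le_sum fun i _ => (hwb i).2
end

section
/- Let L ≥ 1, let n₁,...,n_L > 0 be reals and k₁ < 1/2, τ₁ > 0. Among all positive (α₁,...,α_L) satisfying Σⱼ nⱼ^{k₁} αⱼ = τ₁, the quantity Σⱼ √(nⱼ)/αⱼ is minimized by αⱼ* = τ₁ · nⱼ^{1/4 - k₁/2} / (Σⱼ nⱼ^{1/4 + k₁/2}), and the minimum value is (1/τ₁)(Σⱼ nⱼ^{1/4 + k₁/2})². -/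
open Finset Real

/-- optimal upper weight-bound parameters via Cauchy–Schwarz. -/
theorem lab_cvar_optimal_alpha
    (L : ℕ) (hL : 1 ≤ L) (n : Fin L → ℝ) (hn : ∀ j, 0 < n j)
    (k₁ τ₁ : ℝ) (hk : k₁ < 1/2) (hτ : 0 < τ₁)
    (αstar : Fin L → ℝ)
    (hαstar : ∀ j, αstar j =
      τ₁ * (n j ^ (1/4 - k₁/2 : ℝ)) / (∑ j', n j' ^ (1/4 + k₁/2 : ℝ))) :
    (∑ j, n j ^ (k₁ : ℝ) * αstar j = τ₁) ∧
    (∑ j, Real.sqrt (n j) / αstar j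
        = (1 / τ₁) * (∑ j, n j ^ (1/4 + k₁/2 : ℝ)) ^ 2) ∧
    (∀ α : Fin L → ℝ, (∀ j, 0 < α j) → (∑ j, n j ^ (k₁ : ℝ) * α j = τ₁) →
      (1 / τ₁) * (∑ j, n j ^ (1/4 + k₁/2 : ℝ)) ^ 2 ≤ ∑ j, Real.sqrt (n j) / α j) := by
  set S : ℝ := ∑ j', n j' ^ (1/4 + k₁/2 : ℝ) with hS
  have hSpos : 0 < S := by
    apply Finset.sum_pos
    · intro j _; exact Real.rpow_pos_of_pos (hn j) _
    · exact Finset.univ_nonempty_iff.mpr (Fin.pos_iff_nonempty.mp hL)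
  have h1 : ∑ j, n j ^ (k₁ : ℝ) * αstar j = τ₁ := by
    have key : ∀ j, n j ^ (k₁ : ℝ) * αstar j = τ₁ / S * n j ^ (1/4 + k₁/2 : ℝ) := by
      intro j
      have hp : n j ^ (k₁ : ℝ) * n j ^ (1/4 - k₁/2 : ℝ) = n j ^ (1/4 + k₁/2 : ℝ) := by
        rw [← Real.rpow_add (hn j)]; ring_nf
      rw [hαstar j, ← hp]
      field_simp
    rw [Finset.sum_congr rfl (fun j _ => key j), ← Finset.mul_sum, ← hS]
    field_simp
  refine ⟨h1, ?_, ?_⟩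
  · have key : ∀ j, Real.sqrt (n j) / αstar j = S / τ₁ * n j ^ (1/4 + k₁/2 : ℝ) := by
      intro j
      have hr : (0:ℝ) < n j ^ (1/4 - k₁/2 : ℝ) := Real.rpow_pos_of_pos (hn j) _
      have hp2 : n j ^ (1/4 + k₁/2 : ℝ) * n j ^ (1/4 - k₁/2 : ℝ) = n j ^ ((1:ℝ)/2) := by
        rw [← Real.rpow_add (hn j)]; ring_nf
      rw [hαstar j, Real.sqrt_eq_rpow, ← hp2, div_div_eq_mul_div,
        show n j ^ (1/4+k₁/2:ℝ) * n j ^ (1/4-k₁/2:ℝ) * S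
            = n j ^ (1/4-k₁/2:ℝ) * (n j ^ (1/4+k₁/2:ℝ) * S) from by ring,
        show τ₁ * n j ^ (1/4-k₁/2:ℝ) = n j ^ (1/4-k₁/2:ℝ) * τ₁ from by ring,
        mul_div_mul_left _ _ hr.ne']
      ring
    rw [Finset.sum_congr rfl (fun j _ => key j), ← Finset.mul_sum, ← hS]
    field_simp
  · intro α hα hsum
    have key : S ^ 2 ≤ (∑ j, n j ^ (k₁ : ℝ) * α j) * (∑ j, Real.sqrt (n j) / α j) := by
      have hfg : ∀ j : Fin L, n j ^ (1/4 + k₁/2 : ℝ) =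
          Real.sqrt (n j ^ (k₁ : ℝ) * α j) * Real.sqrt (Real.sqrt (n j) / α j) := by
        intro j
        rw [← Real.sqrt_mul (mul_pos (Real.rpow_pos_of_pos (hn j) _) (hα j)).le]
        have heq : n j ^ (k₁ : ℝ) * α j * (Real.sqrt (n j) / α j)
            = n j ^ (k₁ + 1/2 : ℝ) := by
          rw [Real.sqrt_eq_rpow, Real.rpow_add (hn j)]
          field_simp [(hα j).ne']
        rw [heq, Real.sqrt_eq_rpow, ← Real.rpow_mul (hn j).le]
        congr 1
        ring
      have hcs := Finset.sum_mul_sq_le_sq_mul_sq Finset.univ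
        (fun j => Real.sqrt (n j ^ (k₁ : ℝ) * α j))
        (fun j => Real.sqrt (Real.sqrt (n j) / α j))
      calc S ^ 2 = (∑ j, Real.sqrt (n j ^ (k₁ : ℝ) * α j) *
              Real.sqrt (Real.sqrt (n j) / α j)) ^ 2 := by
            rw [hS]; congr 1; exact Finset.sum_congr rfl (fun j _ => hfg j)
        _ ≤ (∑ j, Real.sqrt (n j ^ (k₁ : ℝ) * α j) ^ 2) *
              (∑ j, Real.sqrt (Real.sqrt (n j) / α j) ^ 2) := hcs
        _ = (∑ j, n j ^ (k₁ : ℝ) * α j) * (∑ j, Real.sqrt (n j) / α j) := by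
            congr 1 <;> apply Finset.sum_congr rfl <;> intro j _ <;>
              rw [Real.sq_sqrt]
            · exact (mul_pos (Real.rpow_pos_of_pos (hn j) _) (hα j)).le
            · exact (div_pos (Real.sqrt_pos.mpr (hn j)) (hα j)).le
    rw [hsum] at key
    rw [div_mul_eq_mul_div, one_mul, div_le_iff₀ hτ]
    linarith [key]
end
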